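/- There exists a finite group G with a subnormal supersoluble subgroup X such that the normal closure X^G is not supersoluble. (For example, G = PSU_3(2) ⋊ C_2 of order 144 with X ≅ S_3 × S_3 inside a maximal subgroup H ≅ S_3 ≀ C_2 of index 2.) -/

import Mathlib

/-- A subgroup `H` of `G` is subnormal if there is a chain
`H = c 0 ≤ c 1 ≤ ... ≤ c n = G` with each term normal in the next. -/
def Subgroup.IsSubnormal' {G : Type*} [Group G] (H : Subgroup G) : Prop :=
  ∃ (n : ℕ) (c : Fin (n + 1) → Subgroup G),
    c 0 = H ∧ c (Fin.last n) = ⊤ ∧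
    ∀ i : Fin n, c i.castSucc ≤ c i.succ ∧
      ((c i.castSucc).subgroupOf (c i.succ)).Normal

/-- A group is supersoluble if it has a normal series (all terms normal in `G`)
with cyclic factors; the factor `c (i+1) / c i` being cyclic is expressed as
`c (i+1)` being generated by `c i` together with a single element. -/
def IsSupersolvable (G : Type*) [Group G] : Prop :=
  ∃ (n : ℕ) (c : Fin (n + 1) → Subgroup G),
    c 0 = ⊥ ∧ c (Fin.last n) = ⊤ ∧
    (∀ i, (c i).Normal) ∧
    ∀ i : Fin n, c i.castSucc ≤ c i.succ ∧
      ∃ g ∈ c i.succ, c i.succ ≤ c i.castSucc ⊔ Subgroup.zpowers g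

/-- The Fitting subgroup: the join of all normal nilpotent subgroups
(in a finite group, the largest normal nilpotent subgroup). -/
def fittingSubgroup (G : Type*) [Group G] : Subgroup G :=
  sSup {N : Subgroup G | N.Normal ∧ Group.IsNilpotent N}

instance fittingSubgroup_normal (G : Type*) [Group G] : (fittingSubgroup G).Normal := by
  constructor
  intro x hx g
  rw [fittingSubgroup, sSup_eq_iSup'] at hx ⊢
  refine Subgroup.iSup_induction
    (C := fun y => g * y * g⁻¹ ∈
      ⨆ (N : {N : Subgroup G // N.Normal ∧ Group.IsNilpotent N}), (N : Subgroup G))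
    _ hx (fun N y hy => ?_) (by simpa using Subgroup.one_mem _) (fun y z hy hz => ?_)
  · exact Subgroup.mem_iSup_of_mem N (N.2.1.conj_mem y hy g)
  · simpa [mul_assoc] using Subgroup.mul_mem _ hy hz

/-- `O_p(G)`: the join of all normal `p`-subgroups
(in a finite group, the largest normal `p`-subgroup). -/
def pCore (p : ℕ) (G : Type*) [Group G] : Subgroup G :=
  sSup {N : Subgroup G | N.Normal ∧ IsPGroup p N}

instance pCore_normal (p : ℕ) (G : Type*) [Group G] : (pCore p G).Normal := by
  constructor
  intro x hx g
  rw [pCore, sSup_eq_iSup'] at hx ⊢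
  refine Subgroup.iSup_induction
    (C := fun y => g * y * g⁻¹ ∈
      ⨆ (N : {N : Subgroup G // N.Normal ∧ IsPGroup p N}), (N : Subgroup G))
    _ hx (fun N y hy => ?_) (by simpa using Subgroup.one_mem _) (fun y z hy hz => ?_)
  · exact Subgroup.mem_iSup_of_mem N (N.2.1.conj_mem y hy g)
  · simpa [mul_assoc] using Subgroup.mul_mem _ hy hz

/-- `G` has a Sylow tower of supersoluble type: a normal series `⊥ = c 0 ≤ ... ≤ c n = ⊤`
(all terms normal in `G`) together with strictly decreasing primes `p 0 > p 1 > ... `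
exhausting the primes dividing `|G|`, such that each factor `c (i+1) / c i` is a
Sylow `p i`-subgroup of `G / c i` (i.e. has order the full `p i`-part of `|G|`). -/
def HasSupersolubleSylowTower (G : Type*) [Group G] : Prop :=
  ∃ (n : ℕ) (c : Fin (n + 1) → Subgroup G) (p : Fin n → ℕ),
    c 0 = ⊥ ∧ c (Fin.last n) = ⊤ ∧
    (∀ i, (c i).Normal) ∧
    (∀ i : Fin n, c i.castSucc ≤ c i.succ) ∧
    (∀ i, (p i).Prime) ∧
    (∀ i j : Fin n, i < j → p j < p i) ∧
    (∀ q : ℕ, q.Prime → q ∣ Nat.card G → ∃ i, p i = q) ∧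
    (∀ i : Fin n,
      Nat.card (c i.succ) = Nat.card (c i.castSucc) * p i ^ (Nat.card G).factorization (p i))

/-!
Take `G = 𝔽₃² ⋊ SD₁₆ ≅ AΓL₁(𝔽₉)`, of order 144: the element `ρ` of order 8 acts as multiplication
by a generator of `𝔽₉ˣ`, and the involution `σ` acts semilinearly, `σρσ⁻¹ = ρ³`. Put
`H = 𝔽₃² ⋊ ⟨ρ², σ⟩ ≅ 𝔽₃² ⋊ D₈` and `X = 𝔽₃² ⋊ ⟨ρ⁴, σ⟩ ≅ S₃ × S₃`, each of index 2 in the next,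
so `X ⊴ H ⊴ G`. The Klein group `⟨ρ⁴, σ⟩` is diagonal in a suitable basis, which makes `X`
supersoluble, and conjugation by `ρ` moves it to the other Klein subgroup of `D₈`, so
`X^G = X X^ρ = H`. But every nontrivial supersoluble group has a normal subgroup of prime order,
and `H` has none: `D₈` acts irreducibly on `𝔽₃²`, and the centre of `H` is trivial.
-/

open Subgroup

section General

variable {Γ : Type*} [Group Γ]

theorem Subgroup.IsSubnormal'.of_subgroupOf_normal {X H : Subgroup Γ} (hXH : X ≤ H)
    (hX : (X.subgroupOf H).Normal) [H.Normal] : X.IsSubnormal' := by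
  refine ⟨2, ![X, H, ⊤], rfl, rfl, fun i => ?_⟩
  fin_cases i
  · exact ⟨hXH, hX⟩
  · exact ⟨le_top, show (H.subgroupOf ⊤).Normal from inferInstance⟩

theorem normalClosure_eq_of_forall_mem_mul_conj {X H : Subgroup Γ} [H.Normal] (hXH : X ≤ H)
    (w : Γ) (hcover : ∀ h ∈ H, ∃ a ∈ X, w⁻¹ * (a⁻¹ * h) * w ∈ X) :
    normalClosure (X : Set Γ) = H := by
  refine le_antisymm (normalClosure_le_normal hXH) fun h hh => ?_
  obtain ⟨a, ha, hb⟩ := hcover h hh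
  have hconj := (normalClosure_normal (s := (X : Set Γ))).conj_mem _ (subset_normalClosure hb) w
  simpa [mul_assoc] using mul_mem (subset_normalClosure ha) hconj

theorem le_sup_zpowers_of_forall_mul_inv_pow_mem {A B : Subgroup Γ} {g : Γ}
    (h : ∀ y ∈ B, ∃ k : ℕ, y * (g ^ k)⁻¹ ∈ A) : B ≤ A ⊔ zpowers g := by
  intro y hy
  obtain ⟨k, hk⟩ := h y hy
  simpa using mul_mem (mem_sup_left hk)
    (mem_sup_right (npow_mem_zpowers g k) : g ^ k ∈ A ⊔ zpowers g)

theorem IsSupersolvable.of_chain {X : Subgroup Γ} {n : ℕ} (c : Fin (n + 1) → Subgroup Γ)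
    (h0 : c 0 = ⊥) (hlast : c (Fin.last n) = X)
    (hnorm : ∀ i, ∀ x ∈ X, ∀ a ∈ c i, x * a * x⁻¹ ∈ c i)
    (hstep : ∀ i : Fin n, c i.castSucc ≤ c i.succ ∧
      ∃ g ∈ c i.succ, c i.succ ≤ c i.castSucc ⊔ zpowers g) :
    IsSupersolvable X := by
  have hle (i : Fin (n + 1)) : c i ≤ X :=
    hlast ▸ Fin.monotone_iff_le_succ.2 (fun i => (hstep i).1) (Fin.le_last i)
  refine ⟨n, fun i => (c i).subgroupOf X, by simp [h0], by simp [hlast],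
    fun i => ⟨fun a ha x => hnorm i x x.2 a ha⟩, fun i => ?_⟩
  obtain ⟨hcs, g, hg, hgen⟩ := hstep i
  refine ⟨fun _ hx => hcs hx, ⟨g, hle _ hg⟩, hg, ?_⟩
  show (c i.succ).subgroupOf X ≤ (c i.castSucc).subgroupOf X ⊔ zpowers ⟨g, hle _ hg⟩
  rw [← map_le_map_iff_of_injective X.subtype_injective, Subgroup.map_sup,
    subgroupOf_map_subtype, subgroupOf_map_subtype, MonoidHom.map_zpowers,
    inf_of_le_left (hle _), inf_of_le_left (hle _)]
  exact hgen

theorem IsSupersolvable.exists_ne_one_zpowers_normal [Nontrivial Γ] (h : IsSupersolvable Γ) :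
    ∃ g : Γ, g ≠ 1 ∧ (zpowers g).Normal := by
  obtain ⟨n, c, h0, hlast, hnorm, hstep⟩ := h
  obtain ⟨i, hi, hi'⟩ : ∃ i : Fin n, c i.castSucc = ⊥ ∧ c i.succ ≠ ⊥ := by
    by_contra! hcon
    have hbot : c (Fin.last n) = ⊥ := Fin.induction (motive := fun j => c j = ⊥) h0 hcon _
    exact bot_ne_top (hbot.symm.trans hlast)
  obtain ⟨-, g, hg, hgen⟩ := hstep i
  rw [hi, bot_sup_eq] at hgen
  have hcg : c i.succ = zpowers g := le_antisymm hgen (zpowers_le.2 hg)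
  exact ⟨g, fun h1 => hi' (by rwa [h1, zpowers_one_eq_bot] at hcg), hcg ▸ hnorm i.succ⟩

theorem Subgroup.Normal.zpowers_pow {g : Γ} (hg : (zpowers g).Normal) (k : ℕ) :
    (zpowers (g ^ k)).Normal := by
  refine ⟨fun y hy x => ?_⟩
  obtain ⟨i, rfl⟩ := mem_zpowers_iff.1 hy
  obtain ⟨j, hj⟩ := mem_zpowers_iff.1 (hg.conj_mem g (mem_zpowers g) x)
  refine mem_zpowers_iff.2 ⟨j * i, ?_⟩
  rw [← conj_zpow, ← conj_pow, ← hj]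
  group

theorem exists_prime_orderOf_zpowers_normal [Finite Γ] {g : Γ} (hg : g ≠ 1)
    (hN : (zpowers g).Normal) : ∃ b : Γ, (orderOf b).Prime ∧ (zpowers b).Normal := by
  refine ⟨g ^ (orderOf g / (orderOf g).minFac), ?_, hN.zpowers_pow _⟩
  rw [orderOf_pow_orderOf_div (orderOf_pos g).ne' (Nat.minFac_dvd _)]
  exact Nat.minFac_prime (mt orderOf_eq_one_iff.1 hg)

theorem not_isSupersolvable_of_forall_prime_orderOf [Finite Γ] [Nontrivial Γ]
    (h : ∀ b : Γ, (orderOf b).Prime → ∃ x, x * b * x⁻¹ ∉ zpowers b) :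
    ¬ IsSupersolvable Γ := by
  intro hs
  obtain ⟨g, hg, hN⟩ := hs.exists_ne_one_zpowers_normal
  obtain ⟨b, hb, hbN⟩ := exists_prime_orderOf_zpowers_normal hg hN
  obtain ⟨x, hx⟩ := h b hb
  exact hx (hbN.conj_mem b (mem_zpowers b) x)

def subgroupOfPred (p : Γ → Prop) (one : p 1) (mul : ∀ a b, p a → p b → p (a * b))
    (inv : ∀ a, p a → p a⁻¹) : Subgroup Γ where
  carrier := {g | p g}
  one_mem' := one
  mul_mem' := mul _ _
  inv_mem' := inv _

instance (p : Γ → Prop) [DecidablePred p] {one mul inv} :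
    DecidablePred (· ∈ subgroupOfPred p one mul inv) :=
  fun g => inferInstanceAs (Decidable (p g))

instance {N K : Type*} [Group N] [Group K] (φ : K →* MulAut N) [DecidableEq N] [DecidableEq K] :
    DecidableEq (N ⋊[φ] K) :=
  SemidirectProduct.equivProd.decidableEq

instance {N K : Type*} [Group N] [Group K] (φ : K →* MulAut N) [Fintype N] [Fintype K] :
    Fintype (N ⋊[φ] K) :=
  Fintype.ofEquiv _ SemidirectProduct.equivProd.symm

end General

set_option maxRecDepth 4000
set_option synthInstance.maxSize 1000

namespace AGammaL19

abbrev V := ZMod 3 × ZMod 3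

/-- The matrix `[[0,1],[1,1]]`, of order 8: multiplication by a generator of `𝔽₉ˣ`. -/
def t (v : V) : V := (v.2, v.1 + v.2)

/-- The matrix `[[1,1],[0,2]]`, an involution with `s t s⁻¹ = t³`. -/
def s (v : V) : V := (v.1 + v.2, 2 * v.2)

abbrev semidihedralAction :
    MulDistribMulAction (Multiplicative (ZMod 2)) (Multiplicative (ZMod 8)) where
  smul e k := .ofAdd (3 ^ e.toAdd.val * k.toAdd)
  one_smul := by decide
  mul_smul := by decide
  smul_mul := by decide
  smul_one := by decide

abbrev SD16 :=
  Multiplicative (ZMod 8) ⋊[@MulDistribMulAction.toMulAut _ _ _ _ semidihedralAction]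
    Multiplicative (ZMod 2)

abbrev linearAction : MulDistribMulAction SD16 (Multiplicative V) where
  smul g v := .ofAdd (t^[g.left.toAdd.val] (s^[g.right.toAdd.val] v.toAdd))
  one_smul := by decide
  mul_smul := by decide
  smul_mul := by decide
  smul_one := by decide

abbrev G := Multiplicative V ⋊[@MulDistribMulAction.toMulAut _ _ _ _ linearAction] SD16

def ρ : G := .inr (.inl (.ofAdd 1))

def σ : G := .inr (.inr (.ofAdd 1))

def a₁ : G := .inl (.ofAdd (1, 0))

def a₂ : G := .inl (.ofAdd (0, 1))

-- `g.right.left` is the `⟨ρ⟩`-component of `g`: `X = 𝔽₃² ⋊ ⟨ρ⁴, σ⟩` and `H = 𝔽₃² ⋊ ⟨ρ², σ⟩`.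
abbrev X : Subgroup G :=
  subgroupOfPred (fun g => g.right.left ^ 2 = 1) (by decide) (by decide) (by decide)

abbrev H : Subgroup G :=
  subgroupOfPred (fun g => g.right.left ^ 4 = 1) (by decide) (by decide) (by decide)

abbrev D₁ : Subgroup G :=
  subgroupOfPred (fun g => g.right = 1 ∧ g.left.toAdd.2 = 0) (by decide) (by decide) (by decide)

abbrev D₂ : Subgroup G :=
  subgroupOfPred (fun g => g.right = 1) (by decide) (by decide) (by decide)

abbrev D₃ : Subgroup G :=
  subgroupOfPred (fun g => g.right.left = 1) (by decide) (by decide) (by decide)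

lemma X_le_H : X ≤ H := by
  rw [SetLike.le_def]
  decide

instance : H.Normal :=
  ⟨by decide⟩

lemma X_isSubnormal' : X.IsSubnormal' :=
  .of_subgroupOf_normal X_le_H ((normal_subgroupOf_iff X_le_H).2 (by decide))

lemma normalClosure_X : normalClosure (X : Set G) = H :=
  normalClosure_eq_of_forall_mem_mul_conj X_le_H ρ (by decide)

lemma X_isSupersolvable : IsSupersolvable X := by
  refine .of_chain ![⊥, D₁, D₂, D₃, X] rfl rfl (fun i => ?_) (fun i => ?_)
  · fin_cases i <;> dsimp
    · simp
    all_goals decide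
  · have le_sup_zpowers {A B : Subgroup G} {g : G} {m : ℕ}
        (h : ∀ y ∈ B, ∃ k < m, y * (g ^ k)⁻¹ ∈ A) : B ≤ A ⊔ zpowers g :=
      le_sup_zpowers_of_forall_mul_inv_pow_mem fun y hy => (h y hy).imp fun _ => And.right
    fin_cases i <;> dsimp
    · exact ⟨bot_le, a₁, by decide, le_sup_zpowers (m := 3) (by simp only [mem_bot]; decide)⟩
    · exact ⟨by rw [SetLike.le_def]; decide, a₂, by decide, le_sup_zpowers (m := 3) (by decide)⟩
    · exact ⟨by rw [SetLike.le_def]; decide, σ, by decide, le_sup_zpowers (m := 2) (by decide)⟩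
    · exact ⟨by rw [SetLike.le_def]; decide, ρ ^ 4, by decide,
        le_sup_zpowers (m := 2) (by decide)⟩

lemma exists_conj_ne_pow : ∀ b ∈ H, b ≠ 1 → b ^ 2 = 1 ∨ b ^ 3 = 1 →
    ∃ x ∈ H, ∀ k < 3, x * b * x⁻¹ ≠ b ^ k := by
  decide

lemma card_H : Nat.card H = 2 ^ 3 * 3 ^ 2 := by
  rw [Nat.card_eq_fintype_card]
  rfl

lemma not_isSupersolvable_H : ¬ IsSupersolvable H := by
  have : Nontrivial H := (nontrivial_iff_exists_ne_one H).2 ⟨σ, by decide, by decide⟩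
  refine not_isSupersolvable_of_forall_prime_orderOf fun b hb => ?_
  have h72 : orderOf b ∣ 2 ^ 3 * 3 ^ 2 := by
    rw [← card_H]
    exact orderOf_dvd_natCard b
  have hp : orderOf b = 2 ∨ orderOf b = 3 := (hb.dvd_mul.1 h72).imp
    (fun h => (Nat.prime_dvd_prime_iff_eq hb Nat.prime_two).1 (hb.dvd_of_dvd_pow h))
    (fun h => (Nat.prime_dvd_prime_iff_eq hb Nat.prime_three).1 (hb.dvd_of_dvd_pow h))
  have hpow : (b : G) ^ 2 = 1 ∨ (b : G) ^ 3 = 1 := by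
    simp only [← orderOf_dvd_iff_pow_eq_one, orderOf_coe]
    rcases hp with h | h <;> simp [h]
  have hb1 : (b : G) ≠ 1 := fun h => hb.ne_one (orderOf_eq_one_iff.2 (Subtype.ext h))
  obtain ⟨x, hxH, hx⟩ := exists_conj_ne_pow b b.2 hb1 hpow
  refine ⟨⟨x, hxH⟩, fun hmem => ?_⟩
  obtain ⟨k, hk, hkb⟩ := Finset.mem_image.1 (mem_zpowers_iff_mem_range_orderOf.1 hmem)
  have hk3 : k < 3 := by
    rw [Finset.mem_range] at hk
    omega
  exact hx k hk3 (by simpa using congrArg Subtype.val hkb.symm)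

end AGammaL19

/-- There is a finite group with a subnormal supersoluble subgroup whose normal
closure is not supersoluble. -/
theorem stmt_19 :
    ∃ (G : Type) (_ : Group G) (_ : Finite G) (X : Subgroup G),
      X.IsSubnormal' ∧ IsSupersolvable X ∧
      ¬ IsSupersolvable (Subgroup.normalClosure (X : Set G)) := by
  refine ⟨AGammaL19.G, inferInstance, inferInstance, AGammaL19.X, AGammaL19.X_isSubnormal',
    AGammaL19.X_isSupersolvable, ?_⟩
  rw [AGammaL19.normalClosure_X]
  exact AGammaL19.not_isSupersolvable_H
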